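/- arXiv:2512.16418 — 3 statements merged into one kernel-verified Lean document; each statement's English description precedes it below -/
import Mathlib

section
/- For every real x and t, the series Σ_{n=0}^∞ tⁿ·H_n(x) converges and equals exp(t·x − t²/2). -/
/-!
Write `exp (t * x - t ^ 2 / 2) = exp (t * x) * exp (-t ^ 2 / 2)` and take the Cauchy product of
the two exponential series. The coefficient of `t ^ n` is
`∑_{k + 2m = n} x ^ k (-1/2) ^ m / (k! m!)`, which is `He_n(x) / n!` by the explicit formula
`(-1) ^ m (2m - 1)‼ (n choose k)` for the coefficients of `Polynomial.hermite n = He_n`;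
and `H n = He_n / n!` by the Rodrigues formula for `He_n`.
-/

/-- Normalized probabilists' Hermite polynomial:
`H n x = ((-1)^n / n!) * exp(x^2/2) * (d^n/dx^n) exp(-x^2/2)`. -/
noncomputable def H (n : ℕ) (x : ℝ) : ℝ :=
  ((-1 : ℝ) ^ n / n.factorial) * Real.exp (x ^ 2 / 2) *
    iteratedDeriv n (fun y : ℝ => Real.exp (-y ^ 2 / 2)) x

open Polynomial Nat Finset

lemma Nat.factorial_two_mul (m : ℕ) : (2 * m)! = 2 ^ m * m ! * (2 * m - 1)‼ := by
  cases m with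
  | zero => rfl
  | succ m =>
    rw [show 2 * (m + 1) = 2 * m + 1 + 1 by ring, factorial_eq_mul_doubleFactorial,
      show 2 * m + 1 + 1 = 2 * (m + 1) by ring, doubleFactorial_two_mul]
    rfl

lemma Real.hasSum_pow_div_factorial (x : ℝ) : HasSum (fun n ↦ x ^ n / n !) (Real.exp x) := by
  rw [Real.exp_eq_exp_ℝ]
  exact NormedSpace.expSeries_div_hasSum_exp x

/-- The Taylor coefficients of `t ↦ exp (-t ^ 2 / 2)` at `0`. -/
noncomputable def gaussianCoeff (m : ℕ) : ℝ :=
  if Even m then (-1 / 2) ^ (m / 2) / (m / 2)! else 0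

lemma gaussianCoeff_two_mul (k : ℕ) : gaussianCoeff (2 * k) = (-1 / 2) ^ k / k ! := by
  simp [gaussianCoeff]

lemma gaussianCoeff_two_mul_add_one (k : ℕ) : gaussianCoeff (2 * k + 1) = 0 := by
  simp [gaussianCoeff]

lemma hasSum_gaussianCoeff (t : ℝ) :
    HasSum (fun m ↦ t ^ m * gaussianCoeff m) (Real.exp (-t ^ 2 / 2)) := by
  rw [← add_zero (Real.exp _)]
  refine HasSum.even_add_odd ?_ (by simp [gaussianCoeff_two_mul_add_one, hasSum_zero])
  refine (Real.hasSum_pow_div_factorial (-t ^ 2 / 2)).congr_fun fun k ↦ ?_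
  rw [gaussianCoeff_two_mul, pow_mul]
  ring

lemma summable_norm_gaussianCoeff (t : ℝ) : Summable (fun m ↦ ‖t ^ m * gaussianCoeff m‖) := by
  refine .even_add_odd ?_ (by simp [gaussianCoeff_two_mul_add_one, summable_zero])
  convert NormedSpace.norm_expSeries_div_summable (-t ^ 2 / 2) using 2 with k
  rw [gaussianCoeff_two_mul, pow_mul, ← mul_div_assoc, ← mul_pow]
  ring_nf

lemma coeff_hermite_div_factorial {n k : ℕ} (h : k ≤ n) :
    ((hermite n).coeff k : ℝ) / n ! = gaussianCoeff (n - k) / k ! := by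
  obtain ⟨j, rfl⟩ := Nat.exists_eq_add_of_le' h
  rw [Nat.add_sub_cancel]
  obtain ⟨m, rfl | rfl⟩ := Nat.even_or_odd' j
  · have hfact :
        ((2 * m + k)! : ℝ) = (2 * m + k).choose k * (2 ^ m * m ! * (2 * m - 1)‼) * k ! := by
      exact_mod_cast (factorial_two_mul m ▸ add_choose_mul_factorial_mul_factorial (2 * m) k).symm
    rw [coeff_hermite_explicit, gaussianCoeff_two_mul, hfact, div_pow]
    have hchoose : ((2 * m + k).choose k : ℝ) ≠ 0 := by exact_mod_cast (choose_pos (by omega)).ne'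
    field_simp
    push_cast
    ring
  · rw [coeff_hermite_of_odd_add ⟨m + k, by ring⟩, gaussianCoeff_two_mul_add_one]
    simp

lemma aeval_hermite_div_factorial_eq_sum (n : ℕ) (x : ℝ) :
    aeval x (hermite n) / n ! = ∑ k ∈ range (n + 1), x ^ k / k ! * gaussianCoeff (n - k) := by
  rw [aeval_eq_sum_range' (natDegree_hermite.trans_lt (lt_add_one n)), sum_div]
  refine sum_congr rfl fun k hk ↦ ?_
  rw [zsmul_eq_mul, mul_div_right_comm,
    coeff_hermite_div_factorial (Nat.lt_succ_iff.mp (mem_range.mp hk))]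
  ring

lemma H_eq_aeval_hermite_div_factorial (n : ℕ) (x : ℝ) :
    H n x = aeval x (hermite n) / n ! := by
  rw [hermite_eq_deriv_gaussian', ← iteratedDeriv_eq_iterate, H]
  simp only [neg_div]
  ring

/-- Generating function of the normalized Hermite polynomials:
for all real `x` and `t`, `Σ_{n} t^n * H n x` converges to `exp (t*x - t^2/2)`. -/
theorem hermite_generating_function (x t : ℝ) :
    HasSum (fun n : ℕ => t ^ n * H n x) (Real.exp (t * x - t ^ 2 / 2)) := by
  have hprod := hasSum_sum_range_mul_of_summable_norm
    (NormedSpace.norm_expSeries_div_summable (t * x)) (summable_norm_gaussianCoeff t)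
  rw [(Real.hasSum_pow_div_factorial (t * x)).tsum_eq,
    (hasSum_gaussianCoeff t).tsum_eq, ← Real.exp_add, neg_div, ← sub_eq_add_neg] at hprod
  refine hprod.congr_fun fun n ↦ ?_
  rw [H_eq_aeval_hermite_div_factorial, aeval_hermite_div_factorial_eq_sum, mul_sum]
  refine sum_congr rfl fun k hk ↦ ?_
  obtain ⟨j, rfl⟩ := Nat.exists_eq_add_of_le (Nat.lt_succ_iff.mp (mem_range.mp hk))
  rw [Nat.add_sub_cancel_left, pow_add]
  ring
end

section
/- Let 0 < s ≤ t and let X and Y be independent real-valued random variables on a probability space, with X centered Gaussian of variance s and Y centered Gaussian of variance t − s. Then for every n ∈ ℕ, almost surely E[ H_n((X+Y)/√t) | σ(X) ] = (s/t)^{n/2}·H_n(X/√s), where E[·|σ(X)] denotes conditional expectation with respect to the σ-algebra generated by X. -/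
/-!
Let `P_v n = hermiteVar v n` be the Hermite polynomial of variance `v`,
`P_v n (x) = v^{n/2} He_n(x/√v)`, so that `H n (x/√v) = P_v n (x) / (v^{n/2} n!)`. It is defined
by `P_v (n+1) = X P_v n - v P_v n'` for every `v` and satisfies `P_v n' = n P_v (n-1)`. Gaussian
integration by parts (Stein's identity `E[(Z - x) f(Z)] = w E[f'(Z)]` for `Z ~ N(x, w)`) applied
to the three-term recursion `P_{v+w} (n+2) = X P_{v+w} (n+1) - (v+w)(n+1) P_{v+w} n` gives
`E[P_{v+w} n (Z)] = P_v n (x)` by induction on `n`. For `v = s`, `w = t - s` this computes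
`E[H_n((x + Y)/√t)]`, and as `Y` is independent of `X`, the conditional expectation given `σ(X)`
is that integral at `x = X`.
-/

open MeasureTheory ProbabilityTheory

namespace Polynomial

variable {R : Type*} [CommRing R]

noncomputable def hermiteVar (v : R) : ℕ → R[X]
  | 0 => 1
  | n + 1 => X * hermiteVar v n - C v * derivative (hermiteVar v n)

@[simp] lemma hermiteVar_zero (v : R) : hermiteVar v 0 = 1 := rfl

lemma hermiteVar_succ (v : R) (n : ℕ) :
    hermiteVar v (n + 1) = X * hermiteVar v n - C v * derivative (hermiteVar v n) := rfl

lemma derivative_hermiteVar_succ (v : R) (n : ℕ) :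
    derivative (hermiteVar v (n + 1)) = C ((n : R) + 1) * hermiteVar v n := by
  induction n with
  | zero => simp [hermiteVar_succ]
  | succ n ih =>
    rw [hermiteVar_succ v (n + 1), derivative_sub, derivative_mul, derivative_X,
      derivative_C_mul, ih, derivative_C_mul, hermiteVar_succ v n]
    simp only [Nat.cast_add, Nat.cast_one, C_add, C_1]
    ring

lemma hermiteVar_succ_succ (v : R) (n : ℕ) :
    hermiteVar v (n + 2) = X * hermiteVar v (n + 1) - C (v * ((n : R) + 1)) * hermiteVar v n := by
  rw [hermiteVar_succ v (n + 1), derivative_hermiteVar_succ, C_mul, mul_assoc]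

lemma hermiteVar_one (n : ℕ) : hermiteVar (1 : R) n = (hermite n).map (Int.castRingHom R) := by
  induction n with
  | zero => simp
  | succ n ih => simp [hermiteVar_succ, hermite_succ, ih, derivative_map]

lemma hermiteVar_comp_C_mul_X (c v : R) (n : ℕ) :
    (hermiteVar (c ^ 2 * v) n).comp (C c * X) = C (c ^ n) * hermiteVar v n := by
  induction n with
  | zero => simp
  | succ n ih =>
    have hd : C c * (derivative (hermiteVar (c ^ 2 * v) n)).comp (C c * X)
        = C (c ^ n) * derivative (hermiteVar v n) := by
      simpa only [derivative_comp, derivative_C_mul, derivative_X, mul_one]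
        using congrArg derivative ih
    rw [hermiteVar_succ, hermiteVar_succ, sub_comp, mul_comp, mul_comp, X_comp, C_comp, ih,
      show C (c ^ 2 * v) = C (c * v) * C c by rw [← C_mul]; ring_nf, mul_assoc (C (c * v)), hd]
    simp only [C_mul, C_pow, pow_succ]
    ring

lemma eval_hermiteVar_sq {K : Type*} [Field K] {σ : K} (hσ : σ ≠ 0) (n : ℕ) (z : K) :
    (hermiteVar (σ ^ 2) n).eval z = σ ^ n * aeval (z / σ) (hermite n) := by
  have h := congrArg (eval (z / σ)) (hermiteVar_comp_C_mul_X σ 1 n)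
  rwa [mul_one, eval_comp, eval_mul, eval_C, eval_X, mul_div_cancel₀ _ hσ, eval_mul, eval_C,
    hermiteVar_one, ← algebraMap_int_eq, eval_map_algebraMap] at h

end Polynomial

open Polynomial
open scoped NNReal

namespace ProbabilityTheory

section GaussianPolynomial

variable {μ : ℝ} {v : ℝ≥0}

lemma hasDerivAt_gaussianPDFReal (μ : ℝ) (v : ℝ≥0) (x : ℝ) :
    HasDerivAt (gaussianPDFReal μ v) (-((x - μ) / v) * gaussianPDFReal μ v x) x := by
  have h : HasDerivAt (fun y => -(y - μ) ^ 2 / (2 * (v : ℝ))) (-((x - μ) / v)) x :=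
    ((((hasDerivAt_id x).sub_const μ).fun_pow 2).fun_neg.div_const (2 * (v : ℝ))).congr_deriv
      (by simp only [id, Nat.cast_ofNat]; ring)
  exact (h.exp.const_mul (√(2 * Real.pi * v))⁻¹).congr_deriv (by rw [gaussianPDFReal]; ring)

lemma integrable_pow_gaussianReal (k : ℕ) :
    Integrable (fun y : ℝ => y ^ k) (gaussianReal μ v) := by
  refine ((memLp_id_gaussianReal (k : ℝ≥0)).integrable_norm_pow').mono' (by fun_prop) ?_
  simp

lemma integrable_eval_gaussianReal (P : ℝ[X]) :
    Integrable (fun y => P.eval y) (gaussianReal μ v) := by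
  simp_rw [eval_eq_sum_range]
  exact integrable_finsetSum _ fun k _ => (integrable_pow_gaussianReal k).const_mul _

lemma integrable_sub_mul_eval_gaussianReal (P : ℝ[X]) :
    Integrable (fun y => (y - μ) * P.eval y) (gaussianReal μ v) := by
  refine (integrable_eval_gaussianReal ((X - C μ) * P)).congr (.of_forall fun y => ?_)
  simp

lemma integrable_eval_mul_gaussianPDFReal (hv : v ≠ 0) (P : ℝ[X]) :
    Integrable (fun y => P.eval y * gaussianPDFReal μ v y) := by
  have h := integrable_eval_gaussianReal (μ := μ) (v := v) P
  rw [gaussianReal_of_var_ne_zero _ hv, integrable_withDensity_iff (measurable_gaussianPDF _ _)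
    (.of_forall fun _ => ENNReal.ofReal_lt_top)] at h
  simpa using h

lemma integral_sub_mul_eval_gaussianReal (P : ℝ[X]) :
    ∫ y, (y - μ) * P.eval y ∂gaussianReal μ v
      = v * ∫ y, (derivative P).eval y ∂gaussianReal μ v := by
  rcases eq_or_ne v 0 with rfl | hv
  · simp [gaussianReal_zero_var]
  have ibp := integral_mul_deriv_eq_deriv_mul_of_integrable
    (u := fun y => P.eval y) (v := gaussianPDFReal μ v)
    (fun y _ => P.hasDerivAt y) (fun y _ => hasDerivAt_gaussianPDFReal μ v y)
    (((integrable_eval_mul_gaussianPDFReal hv ((X - C μ) * P)).const_mul (-(v : ℝ)⁻¹)).congr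
      (.of_forall fun y => by simp only [eval_mul, eval_sub, eval_X, eval_C, Pi.mul_apply]; ring))
    (integrable_eval_mul_gaussianPDFReal hv (derivative P))
    (integrable_eval_mul_gaussianPDFReal hv P)
  have hv' : (v : ℝ) ≠ 0 := by exact_mod_cast hv
  simp_rw [integral_gaussianReal_eq_integral_smul hv, smul_eq_mul]
  calc ∫ y, gaussianPDFReal μ v y * ((y - μ) * P.eval y)
      = -v * ∫ y, P.eval y * (-((y - μ) / v) * gaussianPDFReal μ v y) := by
        rw [← integral_const_mul]
        congr 1 with y
        field_simp
    _ = v * ∫ y, gaussianPDFReal μ v y * (derivative P).eval y := by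
        rw [ibp, neg_mul_neg]
        simp_rw [mul_comm]

end GaussianPolynomial

lemma integral_eval_hermiteVar_gaussianReal (v x : ℝ) (w : ℝ≥0) (n : ℕ) :
    ∫ z, (hermiteVar (v + w) n).eval z ∂gaussianReal x w = (hermiteVar v n).eval x := by
  induction n using Nat.twoStepInduction with
  | zero => simp
  | one => simp [hermiteVar_succ, integral_id_gaussianReal]
  | more n ih₀ ih₁ =>
    have hP : ∀ z, (hermiteVar (v + w) (n + 2)).eval z
        = (z - x) * (hermiteVar (v + w) (n + 1)).eval z + x * (hermiteVar (v + w) (n + 1)).eval z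
          - (v + w) * (n + 1) * (hermiteVar (v + w) n).eval z := by
      intro z
      simp only [hermiteVar_succ_succ, eval_sub, eval_mul, eval_X, eval_C]
      ring
    simp_rw [hP]
    rw [integral_sub, integral_add, integral_const_mul, integral_const_mul,
      integral_sub_mul_eval_gaussianReal, derivative_hermiteVar_succ]
    · simp_rw [eval_C_mul]
      rw [integral_const_mul, ih₀, ih₁, hermiteVar_succ_succ]
      simp only [eval_sub, eval_mul, eval_X, eval_C]
      ring
    · exact integrable_sub_mul_eval_gaussianReal _
    · exact (integrable_eval_gaussianReal _).const_mul x
    · exact (integrable_sub_mul_eval_gaussianReal _).add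
        ((integrable_eval_gaussianReal _).const_mul x)
    · exact (integrable_eval_gaussianReal _).const_mul _

section Independence

variable {Ω β γ F : Type*} {mΩ : MeasurableSpace Ω} {μ : Measure Ω} [IsFiniteMeasure μ]
  {mβ : MeasurableSpace β} [MeasurableSpace γ] [StandardBorelSpace γ] [Nonempty γ]
  [NormedAddCommGroup F] [NormedSpace ℝ F] [CompleteSpace F] {X : Ω → β} {Y : Ω → γ}

lemma IndepFun.condDistrib_ae_eq (hXY : IndepFun X Y μ) (hX : Measurable X)
    (hY : Measurable Y) : condDistrib Y X μ =ᵐ[μ.map X] Kernel.const β (μ.map Y) := by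
  refine condDistrib_ae_eq_of_measure_eq_compProd X hY.aemeasurable ?_
  rw [Measure.compProd_const]
  exact (indepFun_iff_map_prod_eq_prod_map_map hX.aemeasurable hY.aemeasurable).1 hXY

lemma IndepFun.condExp_ae_eq_integral_map (hXY : IndepFun X Y μ) (hX : Measurable X)
    (hY : Measurable Y) {f : β × γ → F} (hf : StronglyMeasurable f)
    (hfi : Integrable (fun ω => f (X ω, Y ω)) μ) :
    μ[fun ω => f (X ω, Y ω) | mβ.comap X]
      =ᵐ[μ] fun ω => ∫ y, f (X ω, y) ∂(μ.map Y) := by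
  filter_upwards [condExp_prod_ae_eq_integral_condDistrib hX hY.aemeasurable hf hfi,
    ae_of_ae_map hX.aemeasurable (hXY.condDistrib_ae_eq hX hY)] with ω h hκ
  rw [h, hκ, Kernel.const_apply]

end Independence

end ProbabilityTheory

lemma H_eq_aeval_hermite (n : ℕ) (x : ℝ) : H n x = aeval x (hermite n) / n.factorial := by
  rw [hermite_eq_deriv_gaussian', H, ← iteratedDeriv_eq_iterate]
  simp only [neg_div]
  ring

@[fun_prop]
lemma continuous_H (n : ℕ) : Continuous (H n) := by
  rw [funext (H_eq_aeval_hermite n)]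
  exact (hermite n).continuous_aeval.div_const _

lemma H_div_sqrt {v : ℝ} (hv : 0 < v) (n : ℕ) (z : ℝ) :
    H n (z / √v) = (hermiteVar v n).eval z / (√v ^ n * n.factorial) := by
  have h := eval_hermiteVar_sq (Real.sqrt_pos.2 hv).ne' n z
  rw [Real.sq_sqrt hv.le] at h
  rw [H_eq_aeval_hermite, h]
  field_simp

lemma integrable_H_div_sqrt_gaussianReal {v : ℝ} (hv : 0 < v) (n : ℕ) (μ : ℝ) (w : ℝ≥0) :
    Integrable (fun z => H n (z / √v)) (gaussianReal μ w) := by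
  simp_rw [H_div_sqrt hv]
  exact (integrable_eval_gaussianReal _).div_const _

lemma integral_H_add_div_sqrt_gaussianReal {s t : ℝ} (hs : 0 < s) (hst : s ≤ t) (n : ℕ)
    (x : ℝ) : ∫ y, H n ((x + y) / √t) ∂gaussianReal 0 (t - s).toNNReal
      = √(s / t) ^ n * H n (x / √s) := by
  have ht := hs.trans_le hst
  have hheat := integral_eval_hermiteVar_gaussianReal s x (t - s).toNNReal n
  rw [Real.coe_toNNReal _ (sub_nonneg.2 hst), add_sub_cancel] at hheat
  have hshift : (gaussianReal 0 (t - s).toNNReal).map (x + ·)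
      = gaussianReal x (t - s).toNNReal := by
    simpa using gaussianReal_map_const_add (μ := 0) x
  rw [← integral_map (f := fun z => H n (z / √t)) (by fun_prop)
    (by fun_prop : Continuous _).aestronglyMeasurable, hshift]
  simp_rw [H_div_sqrt ht]
  rw [integral_div, hheat, H_div_sqrt hs, Real.sqrt_div hs.le, div_pow]
  have hs' : √s ≠ 0 := (Real.sqrt_pos.2 hs).ne'
  have ht' : √t ≠ 0 := (Real.sqrt_pos.2 ht).ne'
  field_simp

/-- Conditional-expectation formula for Hermite polynomials of Gaussian increments:
if `X` and `Y` are independent centered Gaussians with variances `s` and `t − s`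
(`0 < s ≤ t`), then `E[ H_n((X+Y)/√t) | σ(X) ] = (s/t)^{n/2} · H_n(X/√s)` a.s. -/
theorem hermite_condexp {Ω : Type*} [MeasurableSpace Ω] (μ : Measure Ω)
    [IsProbabilityMeasure μ] (s t : ℝ) (hs : 0 < s) (hst : s ≤ t)
    (X Y : Ω → ℝ) (hXm : Measurable X) (hYm : Measurable Y)
    (hindep : IndepFun X Y μ)
    (hX : Measure.map X μ = gaussianReal 0 s.toNNReal)
    (hY : Measure.map Y μ = gaussianReal 0 (t - s).toNNReal) (n : ℕ) :
    μ[fun ω => H n ((X ω + Y ω) / Real.sqrt t) |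
        MeasurableSpace.comap X Real.measurableSpace]
      =ᵐ[μ] fun ω => Real.sqrt (s / t) ^ n * H n (X ω / Real.sqrt s) := by
  have hint : Integrable (fun ω => H n ((X ω + Y ω) / √t)) μ := by
    refine (integrable_map_measure (g := fun z => H n (z / √t))
      (by fun_prop : Continuous _).aestronglyMeasurable (hXm.add hYm).aemeasurable).1 ?_
    rw [gaussianReal_add_gaussianReal_of_indepFun hindep hX hY]
    exact integrable_H_div_sqrt_gaussianReal (hs.trans_le hst) n _ _
  have hf : Continuous fun p : ℝ × ℝ => H n ((p.1 + p.2) / √t) := by fun_prop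
  filter_upwards [hindep.condExp_ae_eq_integral_map hXm hYm hf.stronglyMeasurable hint] with ω hω
  rw [← integral_H_add_div_sqrt_gaussianReal hs hst, ← hY]
  exact hω
end

section
/- Let n ≥ 1, τ > 0, M ∈ ℕ with M ≥ 1, and δ = τ/M. Partition [0,τ]ⁿ into the Mⁿ grid cells ∏_{k=1}^n (s_{i_k−1}, s_{i_k}] where s_i = i·δ. Let g : [0,τ]ⁿ → ℝ satisfy the coordinatewise Hölder condition |g(r_1,…,r_n) − g(u_1,…,u_n)| ≤ κ(|r_1−u_1|^β + ⋯ + |r_n−u_n|^β) for all r, u ∈ [0,τ]ⁿ, with constants κ, β > 0. Let A_M g : [0,τ]ⁿ → ℝ be the step function whose value on each grid cell is the average of g over that cell. Then ∫_{[0,τ]ⁿ} |g − A_M g|² ≤ κ² · n² · τ^{2β+n} · M^{−2β}. -/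
/-!
Every point of the grid cell containing `u` lies within `δ = τ/M` of `u` in each coordinate, so
the Hölder condition bounds `|g u - A_M g u|` by `κ n δ^β` whenever all coordinates of `u` are
positive, i.e. off a null subset of `[0,τ]ⁿ`. Squaring and integrating over a box of volume `τⁿ`
gives `κ² n² δ^{2β} τⁿ = κ² n² τ^{2β+n} M^{-2β}`. The Hölder condition also makes `g` continuous,
hence integrable on every cell, so that each cell average is a genuine average.
-/

open MeasureTheory

/-- The step function of cell averages with respect to the uniform grid of mesh `δ`:
`cellAvg n δ g u` is the average of `g` over the half-open grid cell
`∏_k (δ·(⌈u_k/δ⌉−1), δ·⌈u_k/δ⌉]` containing `u`. -/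
noncomputable def cellAvg (n : ℕ) (δ : ℝ) (g : (Fin n → ℝ) → ℝ) (u : Fin n → ℝ) : ℝ :=
  (δ ^ n)⁻¹ *
    ∫ r in Set.univ.pi fun k =>
        Set.Ioc (δ * ((⌈u k / δ⌉ : ℝ) - 1)) (δ * (⌈u k / δ⌉ : ℝ)), g r

open Set

theorem continuousOn_of_abs_sub_le_mul_sum_rpow {ι : Type*} [Fintype ι] {s : Set (ι → ℝ)}
    {g : (ι → ℝ) → ℝ} {κ β : ℝ} (hβ : 0 < β)
    (hg : ∀ r ∈ s, ∀ u ∈ s, |g r - g u| ≤ κ * ∑ i, |r i - u i| ^ β) : ContinuousOn g s := by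
  intro u hu
  have hcont : Continuous fun r : ι → ℝ => κ * ∑ i, |r i - u i| ^ β :=
    continuous_const.mul <| continuous_finsetSum _ fun i _ =>
      (Real.continuous_rpow_const hβ.le).comp ((continuous_apply i).sub continuous_const).abs
  have hlim : Filter.Tendsto (fun r : ι → ℝ => κ * ∑ i, |r i - u i| ^ β) (nhdsWithin u s)
      (nhds 0) := by
    simpa [Real.zero_rpow hβ.ne'] using (hcont.tendsto u).mono_left nhdsWithin_le_nhds
  rw [ContinuousWithinAt, ← tendsto_sub_nhds_zero_iff]
  refine squeeze_zero_norm' ?_ hlim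
  filter_upwards [self_mem_nhdsWithin] with r hr using hg r hr u hu

theorem abs_setAverage_sub_le {α : Type*} [MeasurableSpace α] {μ : Measure α} {s : Set α}
    {f : α → ℝ} {c C : ℝ} (hs : MeasurableSet s) (h0 : μ s ≠ 0) (hfin : μ s ≠ ⊤)
    (hf : IntegrableOn f s μ) (hC : ∀ x ∈ s, |f x - c| ≤ C) :
    |(⨍ x in s, f x ∂μ) - c| ≤ C := by
  have hball : ∀ᵐ x ∂μ.restrict s, f x ∈ Metric.closedBall c C :=
    (ae_restrict_iff' hs).2 (Filter.Eventually.of_forall hC)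
  exact (convex_closedBall c C).set_average_mem Metric.isClosed_closedBall h0 hfin hball hf

theorem setIntegral_sq_le_of_abs_le {α : Type*} [MeasurableSpace α] {μ : Measure α}
    {s : Set α} {f : α → ℝ} {C : ℝ} (hs : μ s < ⊤) (hC : ∀ x ∈ s, |f x| ≤ C) :
    ∫ x in s, f x ^ 2 ∂μ ≤ C ^ 2 * μ.real s := by
  refine (Real.le_norm_self _).trans (norm_setIntegral_le_of_norm_le_const hs fun x hx => ?_)
  rw [Real.norm_eq_abs, abs_pow]
  exact pow_le_pow_left₀ (abs_nonneg _) (hC x hx) 2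

def gridCell {ι : Type*} (δ : ℝ) (u : ι → ℝ) : Set (ι → ℝ) :=
  univ.pi fun k => Ioc (δ * ((⌈u k / δ⌉ : ℝ) - 1)) (δ * (⌈u k / δ⌉ : ℝ))

section gridCell

variable {ι : Type*} {δ : ℝ}

theorem mem_Ioc_mul_ceil_div (hδ : 0 < δ) (x : ℝ) :
    x ∈ Ioc (δ * ((⌈x / δ⌉ : ℝ) - 1)) (δ * (⌈x / δ⌉ : ℝ)) := by
  have hlt : (⌈x / δ⌉ : ℝ) - 1 < x / δ := by linarith [Int.ceil_lt_add_one (x / δ)]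
  constructor
  · calc δ * ((⌈x / δ⌉ : ℝ) - 1) < δ * (x / δ) := mul_lt_mul_of_pos_left hlt hδ
      _ = x := mul_div_cancel₀ x hδ.ne'
  · calc x = δ * (x / δ) := (mul_div_cancel₀ x hδ.ne').symm
      _ ≤ δ * (⌈x / δ⌉ : ℝ) := mul_le_mul_of_nonneg_left (Int.le_ceil _) hδ.le

theorem Ioc_mul_ceil_div_subset_Icc (hδ : 0 < δ) {m : ℤ} {x : ℝ}
    (hx : x ∈ Ioc 0 (m * δ)) :
    Ioc (δ * ((⌈x / δ⌉ : ℝ) - 1)) (δ * (⌈x / δ⌉ : ℝ)) ⊆ Icc 0 (m * δ) := by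
  have hpos : (1 : ℝ) ≤ ⌈x / δ⌉ := by exact_mod_cast Int.ceil_pos.2 (div_pos hx.1 hδ)
  have hle : (⌈x / δ⌉ : ℝ) ≤ m := by
    exact_mod_cast Int.ceil_le.2 ((div_le_iff₀ hδ).2 hx.2)
  refine Ioc_subset_Icc_self.trans (Icc_subset_Icc ?_ ?_)
  · exact mul_nonneg hδ.le (sub_nonneg.2 hpos)
  · rw [mul_comm]
    exact mul_le_mul_of_nonneg_right hle hδ.le

theorem gridCell_subset_pi_Icc (hδ : 0 < δ) {m : ℤ} {u : ι → ℝ}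
    (hu : u ∈ univ.pi fun _ => Ioc 0 (m * δ)) :
    gridCell δ u ⊆ univ.pi fun _ => Icc 0 (m * δ) :=
  pi_mono fun k _ => Ioc_mul_ceil_div_subset_Icc hδ (hu k (mem_univ k))

theorem self_mem_gridCell (hδ : 0 < δ) (u : ι → ℝ) : u ∈ gridCell δ u :=
  fun k _ => mem_Ioc_mul_ceil_div hδ (u k)

theorem abs_sub_le_of_mem_gridCell (hδ : 0 < δ) {r u : ι → ℝ} (hr : r ∈ gridCell δ u)
    (k : ι) : |r k - u k| ≤ δ := by
  have hrk := hr k (mem_univ k)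
  have huk := mem_Ioc_mul_ceil_div hδ (u k)
  rw [abs_sub_le_iff]
  constructor <;> nlinarith [hrk.1, hrk.2, huk.1, huk.2]

theorem measurableSet_gridCell [Countable ι] (u : ι → ℝ) : MeasurableSet (gridCell δ u) :=
  MeasurableSet.univ_pi fun _ => measurableSet_Ioc

theorem volume_gridCell [Fintype ι] (u : ι → ℝ) :
    volume (gridCell δ u) = ENNReal.ofReal δ ^ Fintype.card ι := by
  simp only [gridCell, Real.volume_pi_Ioc, mul_sub, mul_one, sub_sub_cancel,
    Finset.prod_const, Finset.card_univ]

end gridCell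

theorem cellAvg_eq_setAverage {n : ℕ} {δ : ℝ} (hδ : 0 ≤ δ) (g : (Fin n → ℝ) → ℝ)
    (u : Fin n → ℝ) : cellAvg n δ g u = ⨍ r in gridCell δ u, g r := by
  rw [setAverage_eq, measureReal_def, volume_gridCell, ENNReal.toReal_pow,
    ENNReal.toReal_ofReal hδ, Fintype.card_fin, smul_eq_mul]
  rfl

theorem abs_sub_cellAvg_le {n : ℕ} {δ κ β : ℝ} (hδ : 0 < δ) (hκ : 0 ≤ κ) (hβ : 0 ≤ β)
    {g : (Fin n → ℝ) → ℝ} {u : Fin n → ℝ} (hgi : IntegrableOn g (gridCell δ u))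
    (hg : ∀ r ∈ gridCell δ u, |g r - g u| ≤ κ * ∑ i, |r i - u i| ^ β) :
    |g u - cellAvg n δ g u| ≤ κ * n * δ ^ β := by
  have hvol : volume (gridCell δ u) = ENNReal.ofReal δ ^ n := by
    rw [volume_gridCell, Fintype.card_fin]
  rw [cellAvg_eq_setAverage hδ.le, abs_sub_comm]
  refine abs_setAverage_sub_le (measurableSet_gridCell u) (by simp [hvol, hδ])
    (by simp [hvol]) hgi fun r hr => ?_
  calc |g r - g u| ≤ κ * ∑ i, |r i - u i| ^ β := hg r hr
    _ ≤ κ * ∑ _i : Fin n, δ ^ β := by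
      gcongr with i
      exact abs_sub_le_of_mem_gridCell hδ hr i
    _ = κ * n * δ ^ β := by simp [mul_assoc]

theorem cell_average_approximation_general (n : ℕ) (τ : ℝ) (hτ : 0 < τ)
    (M : ℕ) (hM : 1 ≤ M) (κ β : ℝ) (hκ : 0 < κ) (hβ : 0 < β)
    (g : (Fin n → ℝ) → ℝ)
    (hg : ∀ r ∈ Set.univ.pi fun _ : Fin n => Set.Icc (0 : ℝ) τ,
          ∀ u ∈ Set.univ.pi fun _ : Fin n => Set.Icc (0 : ℝ) τ,
            |g r - g u| ≤ κ * ∑ i, |r i - u i| ^ β) :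
    (∫ u in Set.univ.pi fun _ : Fin n => Set.Icc (0 : ℝ) τ,
        (g u - cellAvg n (τ / M) g u) ^ 2)
      ≤ κ ^ 2 * n ^ 2 * τ ^ (2 * β + n) * (M : ℝ) ^ (-(2 * β)) := by
  have hM0 : (0 : ℝ) < M := by exact_mod_cast hM
  set δ := τ / M with hδ_def
  have hδ : 0 < δ := div_pos hτ hM0
  have hτ_eq : τ = ((M : ℤ) : ℝ) * δ := by push_cast; exact (mul_div_cancel₀ τ hM0.ne').symm
  have hgi : IntegrableOn g (univ.pi fun _ => Icc 0 τ) :=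
    (continuousOn_of_abs_sub_le_mul_sum_rpow hβ hg).integrableOn_compact
      (isCompact_univ_pi fun _ => isCompact_Icc)
  have hpointwise : ∀ u ∈ univ.pi fun _ : Fin n => Ioc 0 τ,
      |g u - cellAvg n δ g u| ≤ κ * n * δ ^ β := by
    intro u hu
    have hcell : gridCell δ u ⊆ univ.pi fun _ => Icc 0 τ := by
      rw [hτ_eq] at hu ⊢; exact gridCell_subset_pi_Icc hδ hu
    exact abs_sub_cellAvg_le hδ hκ.le hβ.le (hgi.mono_set hcell) fun r hr =>
      hg r (hcell hr) u (hcell (self_mem_gridCell hδ u))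
  calc (∫ u in univ.pi fun _ => Icc 0 τ, (g u - cellAvg n δ g u) ^ 2)
      = ∫ u in univ.pi fun _ => Ioc 0 τ, (g u - cellAvg n δ g u) ^ 2 :=
        setIntegral_congr_set Measure.pi_Ioc_ae_eq_pi_Icc.symm
    _ ≤ (κ * n * δ ^ β) ^ 2 * τ ^ n := by
        refine (setIntegral_sq_le_of_abs_le ?_ hpointwise).trans_eq ?_
        · simp [Real.volume_pi_Ioc]
        · simp [measureReal_def, Real.volume_pi_Ioc, hτ.le]
    _ = κ ^ 2 * n ^ 2 * τ ^ (2 * β + n) * (M : ℝ) ^ (-(2 * β)) := by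
        have hsq : ∀ x : ℝ, 0 ≤ x → x ^ (2 * β) = (x ^ β) ^ 2 := fun x hx => by
          rw [mul_comm, Real.rpow_mul hx, Real.rpow_two]
        rw [hδ_def, Real.div_rpow hτ.le hM0.le, Real.rpow_add hτ, Real.rpow_natCast,
          Real.rpow_neg hM0.le, hsq τ hτ.le, hsq M hM0.le]
        ring

/-- Lemma 4.4 of the paper: if `g` is coordinatewise `β`-Hölder on `[0,τ]ⁿ` with constant
`κ`, and `A_M g` is the step function of cell averages over the uniform grid of mesh
`δ = τ/M`, then `∫_{[0,τ]ⁿ} |g − A_M g|² ≤ κ²·n²·τ^{2β+n}·M^{−2β}`. -/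
theorem cell_average_approximation (n : ℕ) (hn : 1 ≤ n) (τ : ℝ) (hτ : 0 < τ)
    (M : ℕ) (hM : 1 ≤ M) (κ β : ℝ) (hκ : 0 < κ) (hβ : 0 < β)
    (g : (Fin n → ℝ) → ℝ)
    (hg : ∀ r ∈ Set.univ.pi fun _ : Fin n => Set.Icc (0 : ℝ) τ,
          ∀ u ∈ Set.univ.pi fun _ : Fin n => Set.Icc (0 : ℝ) τ,
            |g r - g u| ≤ κ * ∑ i, |r i - u i| ^ β) :
    (∫ u in Set.univ.pi fun _ : Fin n => Set.Icc (0 : ℝ) τ,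
        (g u - cellAvg n (τ / M) g u) ^ 2)
      ≤ κ ^ 2 * n ^ 2 * τ ^ (2 * β + n) * (M : ℝ) ^ (-(2 * β)) :=
  cell_average_approximation_general n τ hτ M hM κ β hκ hβ g hg
end
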